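/- Let U ⊆ ℝ² be open with coordinates (u,v), let φ, k₁, k₂, Ω, Ω₁, Ω₂, W : U → ℝ be smooth with φ > 0, satisfying the Ribaucour sphere-congruence system (R1)–(R6), and suppose there are constants c ≠ 0, c₁, c₂, c₃ such that the first integral Ω₁² + Ω₂² + W² − 2cΩW + c₂W + c₃Ω + c₁ = 0 holds on U. Assume moreover that Ω₁ and Ω₂ vanish nowhere on U. Then the Hessian of Ω with respect to the metric φ²(du²+dv²) satisfies ∇²Ω = (cW − c₃/2)I + (cΩ − W − c₂/2)II; explicitly, the following three identities hold on U: (i) Ω_uv/φ − Ω_uφ_v/φ² − Ω_vφ_u/φ² = 0; (ii) Ω_uu/φ − Ω_uφ_u/φ² + Ω_vφ_v/φ² = φ(cW − c₃/2) + φk₁(cΩ − W − c₂/2); (iii) Ω_vv/φ − Ω_vφ_v/φ² + Ω_uφ_u/φ² = φ(cW − c₃/2) + φk₂(cΩ − W − c₂/2). -/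

import Mathlib

/-- Partial derivative in the `u`-direction of a function on `ℝ²`. -/
noncomputable def pu (f : ℝ × ℝ → ℝ) (p : ℝ × ℝ) : ℝ := fderiv ℝ f p (1, 0)

/-- Partial derivative in the `v`-direction of a function on `ℝ²`. -/
noncomputable def pv (f : ℝ × ℝ → ℝ) (p : ℝ × ℝ) : ℝ := fderiv ℝ f p (0, 1)

/-!
Differentiating the first integral in the `u`-direction and using (R2), (R3), (R5) gives
`Ω₁ · (Ω₁,u + Ω₂ φ_v/φ − φ(cW − c₃/2) − φk₁(cΩ − W − c₂/2)) = 0`, so where `Ω₁ ≠ 0` this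
determines `Ω₁,u`; by (R3) and (R4) the `uu`-entry of the Hessian is exactly
`Ω₁,u + Ω₂ φ_v/φ`. The `vv`-entry follows by the symmetry `u ↔ v` of the system, and the
`uv`-entry vanishes by (R1) alone.
-/

open Filter Topology

section PartialDerivatives

variable {f g : ℝ × ℝ → ℝ} {p : ℝ × ℝ}

theorem Filter.EventuallyEq.pu_eq (h : f =ᶠ[𝓝 p] g) : pu f p = pu g p := by
  rw [pu, pu, h.fderiv_eq]

theorem Filter.EventuallyEq.pv_eq (h : f =ᶠ[𝓝 p] g) : pv f p = pv g p := by
  rw [pv, pv, h.fderiv_eq]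

theorem pu_mul (hf : DifferentiableAt ℝ f p) (hg : DifferentiableAt ℝ g p) :
    pu (fun x => f x * g x) p = pu f p * g p + f p * pu g p := by
  simp only [pu, fderiv_fun_mul hf hg, add_apply, smul_apply, smul_eq_mul]
  ring

theorem pv_mul (hf : DifferentiableAt ℝ f p) (hg : DifferentiableAt ℝ g p) :
    pv (fun x => f x * g x) p = pv f p * g p + f p * pv g p := by
  simp only [pv, fderiv_fun_mul hf hg, add_apply, smul_apply, smul_eq_mul]
  ring

@[simp]
theorem pu_comp_swap (f : ℝ × ℝ → ℝ) : pu (f ∘ Prod.swap) = pv f ∘ Prod.swap := by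
  funext q
  exact congrArg (· (1, 0)) ((ContinuousLinearEquiv.prodComm ℝ ℝ ℝ).comp_right_fderiv (f := f))

@[simp]
theorem pv_comp_swap (f : ℝ × ℝ → ℝ) : pv (f ∘ Prod.swap) = pu f ∘ Prod.swap := by
  funext q
  exact congrArg (· (0, 1)) ((ContinuousLinearEquiv.prodComm ℝ ℝ ℝ).comp_right_fderiv (f := f))

end PartialDerivatives

theorem DifferentiableAt.comp_swap {E F G : Type*} [NormedAddCommGroup E] [NormedSpace ℝ E]
    [NormedAddCommGroup F] [NormedSpace ℝ F] [NormedAddCommGroup G] [NormedSpace ℝ G]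
    {f : E × F → G} {p : E × F} (hf : DifferentiableAt ℝ f p) :
    DifferentiableAt ℝ (f ∘ Prod.swap) p.swap :=
  (p.swap_swap ▸ hf).comp p.swap (ContinuousLinearEquiv.prodComm ℝ F E).differentiableAt

theorem first_integral_fderiv_apply_eq_zero {E : Type*} [NormedAddCommGroup E]
    [NormedSpace ℝ E] {U : Set E} {p : E} {Om Om₁ Om₂ W : E → ℝ} {c c₁ c₂ c₃ : ℝ}
    (hU : U ∈ 𝓝 p) (hOm : DifferentiableAt ℝ Om p) (hOm₁ : DifferentiableAt ℝ Om₁ p)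
    (hOm₂ : DifferentiableAt ℝ Om₂ p) (hW : DifferentiableAt ℝ W p)
    (hfirst : ∀ q ∈ U, Om₁ q ^ 2 + Om₂ q ^ 2 + W q ^ 2 - 2 * c * Om q * W q
      + c₂ * W q + c₃ * Om q + c₁ = 0) (w : E) :
    2 * Om₁ p * fderiv ℝ Om₁ p w + 2 * Om₂ p * fderiv ℝ Om₂ p w
      + (2 * W p - 2 * c * Om p + c₂) * fderiv ℝ W p w
      + (c₃ - 2 * c * W p) * fderiv ℝ Om p w = 0 := by
  have hderiv := ((((((hOm₁.hasFDerivAt.pow 2).add (hOm₂.hasFDerivAt.pow 2)).add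
    (hW.hasFDerivAt.pow 2)).sub ((hOm.hasFDerivAt.const_mul (2 * c)).mul hW.hasFDerivAt)).add
    (hW.hasFDerivAt.const_mul c₂)).add (hOm.hasFDerivAt.const_mul c₃)).add_const c₁
  have hzero : HasFDerivAt (fun q => Om₁ q ^ 2 + Om₂ q ^ 2 + W q ^ 2 - 2 * c * Om q * W q
      + c₂ * W q + c₃ * Om q + c₁) (0 : E →L[ℝ] ℝ) p :=
    (hasFDerivAt_const 0 p).congr_of_eventuallyEq (eventuallyEq_of_mem hU hfirst)
  have h := congrArg (· w) (hderiv.unique hzero)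
  simp only [add_apply, sub_apply, smul_apply, zero_apply, smul_eq_mul] at h
  linear_combination h

structure RibaucourSystem (U : Set (ℝ × ℝ)) (φ k₁ k₂ Om Om₁ Om₂ W : ℝ × ℝ → ℝ) : Prop where
  pv_Om₁ : ∀ p ∈ U, pv Om₁ p = Om₂ p * (pu φ p / φ p)
  pu_Om₂ : ∀ p ∈ U, pu Om₂ p = Om₁ p * (pv φ p / φ p)
  pu_Om : ∀ p ∈ U, pu Om p = φ p * Om₁ p
  pv_Om : ∀ p ∈ U, pv Om p = φ p * Om₂ p
  pu_W : ∀ p ∈ U, pu W p = Om₁ p * k₁ p * φ p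
  pv_W : ∀ p ∈ U, pv W p = Om₂ p * k₂ p * φ p

namespace RibaucourSystem

variable {U : Set (ℝ × ℝ)} {φ k₁ k₂ Om Om₁ Om₂ W : ℝ × ℝ → ℝ}

theorem swap (h : RibaucourSystem U φ k₁ k₂ Om Om₁ Om₂ W) :
    RibaucourSystem (Prod.swap ⁻¹' U) (φ ∘ Prod.swap) (k₂ ∘ Prod.swap) (k₁ ∘ Prod.swap)
      (Om ∘ Prod.swap) (Om₂ ∘ Prod.swap) (Om₁ ∘ Prod.swap) (W ∘ Prod.swap) where
  pv_Om₁ p hp := by simpa using h.pu_Om₂ _ hp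
  pu_Om₂ p hp := by simpa using h.pv_Om₁ _ hp
  pu_Om p hp := by simpa using h.pv_Om _ hp
  pv_Om p hp := by simpa using h.pu_Om _ hp
  pu_W p hp := by simpa using h.pv_W _ hp
  pv_W p hp := by simpa using h.pu_W _ hp

variable {p : ℝ × ℝ} {c c₁ c₂ c₃ : ℝ}

theorem hessian_uv (h : RibaucourSystem U φ k₁ k₂ Om Om₁ Om₂ W) (hU : U ∈ 𝓝 p)
    (hφ : DifferentiableAt ℝ φ p) (hOm₁ : DifferentiableAt ℝ Om₁ p) (hφp : φ p ≠ 0) :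
    pv (pu Om) p / φ p - pu Om p * pv φ p / φ p ^ 2 - pv Om p * pu φ p / φ p ^ 2 = 0 := by
  have hp := mem_of_mem_nhds hU
  rw [(eventuallyEq_of_mem hU h.pu_Om).pv_eq, pv_mul hφ hOm₁, h.pv_Om₁ p hp, h.pu_Om p hp,
    h.pv_Om p hp]
  field_simp
  ring

theorem hessian_uu (h : RibaucourSystem U φ k₁ k₂ Om Om₁ Om₂ W) (hU : U ∈ 𝓝 p)
    (hφ : DifferentiableAt ℝ φ p) (hOm : DifferentiableAt ℝ Om p)
    (hOm₁ : DifferentiableAt ℝ Om₁ p) (hOm₂ : DifferentiableAt ℝ Om₂ p)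
    (hW : DifferentiableAt ℝ W p) (hφp : φ p ≠ 0)
    (hfirst : ∀ q ∈ U, Om₁ q ^ 2 + Om₂ q ^ 2 + W q ^ 2 - 2 * c * Om q * W q
      + c₂ * W q + c₃ * Om q + c₁ = 0) (hOm₁p : Om₁ p ≠ 0) :
    pu (pu Om) p / φ p - pu Om p * pu φ p / φ p ^ 2 + pv Om p * pv φ p / φ p ^ 2
      = φ p * (c * W p - c₃ / 2) + φ p * k₁ p * (c * Om p - W p - c₂ / 2) := by
  have hp := mem_of_mem_nhds hU
  have hfirst_u : 2 * Om₁ p * pu Om₁ p + 2 * Om₂ p * pu Om₂ p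
      + (2 * W p - 2 * c * Om p + c₂) * pu W p + (c₃ - 2 * c * W p) * pu Om p = 0 :=
    first_integral_fderiv_apply_eq_zero hU hOm hOm₁ hOm₂ hW hfirst (1, 0)
  rw [h.pu_Om₂ p hp, h.pu_W p hp, h.pu_Om p hp] at hfirst_u
  have hOm₁u : pu Om₁ p = φ p * (c * W p - c₃ / 2) + φ p * k₁ p * (c * Om p - W p - c₂ / 2)
      - Om₂ p * pv φ p / φ p :=
    mul_left_cancel₀ hOm₁p (by linear_combination hfirst_u / 2)
  rw [(eventuallyEq_of_mem hU h.pu_Om).pu_eq, pu_mul hφ hOm₁, hOm₁u, h.pu_Om p hp, h.pv_Om p hp]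
  field_simp
  ring

theorem hessian_vv (h : RibaucourSystem U φ k₁ k₂ Om Om₁ Om₂ W) (hU : U ∈ 𝓝 p)
    (hφ : DifferentiableAt ℝ φ p) (hOm : DifferentiableAt ℝ Om p)
    (hOm₁ : DifferentiableAt ℝ Om₁ p) (hOm₂ : DifferentiableAt ℝ Om₂ p)
    (hW : DifferentiableAt ℝ W p) (hφp : φ p ≠ 0)
    (hfirst : ∀ q ∈ U, Om₁ q ^ 2 + Om₂ q ^ 2 + W q ^ 2 - 2 * c * Om q * W q
      + c₂ * W q + c₃ * Om q + c₁ = 0) (hOm₂p : Om₂ p ≠ 0) :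
    pv (pv Om) p / φ p - pv Om p * pv φ p / φ p ^ 2 + pu Om p * pu φ p / φ p ^ 2
      = φ p * (c * W p - c₃ / 2) + φ p * k₂ p * (c * Om p - W p - c₂ / 2) := by
  have hU' : Prod.swap ⁻¹' U ∈ 𝓝 p.swap :=
    continuous_swap.continuousAt.preimage_mem_nhds (by rwa [Prod.swap_swap])
  have hfirst' : ∀ q ∈ Prod.swap ⁻¹' U, (Om₂ ∘ Prod.swap) q ^ 2 + (Om₁ ∘ Prod.swap) q ^ 2
      + (W ∘ Prod.swap) q ^ 2 - 2 * c * (Om ∘ Prod.swap) q * (W ∘ Prod.swap) q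
      + c₂ * (W ∘ Prod.swap) q + c₃ * (Om ∘ Prod.swap) q + c₁ = 0 := fun q hq => by
    simp only [Function.comp_apply]
    linarith [hfirst _ hq]
  simpa using h.swap.hessian_uu hU' hφ.comp_swap hOm.comp_swap hOm₂.comp_swap
    hOm₁.comp_swap hW.comp_swap (by simpa using hφp) hfirst' (by simpa using hOm₂p)

end RibaucourSystem

theorem hessian_of_omega_first_integral
    (U : Set (ℝ × ℝ)) (hU : IsOpen U)
    (φ k₁ k₂ Om Om₁ Om₂ W : ℝ × ℝ → ℝ)
    (hφ : ContDiffOn ℝ (⊤ : ℕ∞) φ U)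
    (hOm : ContDiffOn ℝ (⊤ : ℕ∞) Om U)
    (hOm₁ : ContDiffOn ℝ (⊤ : ℕ∞) Om₁ U) (hOm₂ : ContDiffOn ℝ (⊤ : ℕ∞) Om₂ U)
    (hW : ContDiffOn ℝ (⊤ : ℕ∞) W U)
    (hφpos : ∀ p ∈ U, 0 < φ p)
    (hR1 : ∀ p ∈ U, pv Om₁ p = Om₂ p * (pu φ p / φ p))
    (hR2 : ∀ p ∈ U, pu Om₂ p = Om₁ p * (pv φ p / φ p))
    (hR3 : ∀ p ∈ U, pu Om p = φ p * Om₁ p)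
    (hR4 : ∀ p ∈ U, pv Om p = φ p * Om₂ p)
    (hR5 : ∀ p ∈ U, pu W p = Om₁ p * k₁ p * φ p)
    (hR6 : ∀ p ∈ U, pv W p = Om₂ p * k₂ p * φ p)
    (c c₁ c₂ c₃ : ℝ)
    (hfirst : ∀ p ∈ U, Om₁ p ^ 2 + Om₂ p ^ 2 + W p ^ 2 - 2 * c * Om p * W p
      + c₂ * W p + c₃ * Om p + c₁ = 0)
    (hOm₁ne : ∀ p ∈ U, Om₁ p ≠ 0) (hOm₂ne : ∀ p ∈ U, Om₂ p ≠ 0) :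
    ∀ p ∈ U,
      pv (pu Om) p / φ p - pu Om p * pv φ p / φ p ^ 2
        - pv Om p * pu φ p / φ p ^ 2 = 0 ∧
      pu (pu Om) p / φ p - pu Om p * pu φ p / φ p ^ 2 + pv Om p * pv φ p / φ p ^ 2
        = φ p * (c * W p - c₃ / 2) + φ p * k₁ p * (c * Om p - W p - c₂ / 2) ∧
      pv (pv Om) p / φ p - pv Om p * pv φ p / φ p ^ 2 + pu Om p * pu φ p / φ p ^ 2
        = φ p * (c * W p - c₃ / 2) + φ p * k₂ p * (c * Om p - W p - c₂ / 2) := by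
  intro p hp
  have hsys : RibaucourSystem U φ k₁ k₂ Om Om₁ Om₂ W := ⟨hR1, hR2, hR3, hR4, hR5, hR6⟩
  have hUp : U ∈ 𝓝 p := hU.mem_nhds hp
  have hdiff {f : ℝ × ℝ → ℝ} (hf : ContDiffOn ℝ (⊤ : ℕ∞) f U) : DifferentiableAt ℝ f p :=
    (hf.differentiableOn (by simp)).differentiableAt hUp
  have hφp := (hφpos p hp).ne'
  exact ⟨hsys.hessian_uv hUp (hdiff hφ) (hdiff hOm₁) hφp,
    hsys.hessian_uu hUp (hdiff hφ) (hdiff hOm) (hdiff hOm₁) (hdiff hOm₂) (hdiff hW) hφp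
      hfirst (hOm₁ne p hp),
    hsys.hessian_vv hUp (hdiff hφ) (hdiff hOm) (hdiff hOm₁) (hdiff hOm₂) (hdiff hW) hφp
      hfirst (hOm₂ne p hp)⟩
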